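/- arXiv:1803.01813 — 3 statements merged into one kernel-verified Lean document; each statement's English description precedes it below -/
import Mathlib

section
/- For all integers k ≥ 1, the inequality ∑_{ℓ=1}^{k} ((ℓ-1)k + 2ℓ)/ℓ! ≥ k holds. -/
/-!
Split off the part that is linear in `k`. Since `(ℓ - 1) / ℓ! = 1 / (ℓ - 1)! - 1 / ℓ!`, its
coefficient telescopes to `1 - 1 / k!`, leaving a deficit of `k / k!`; the term `2k / k!` with
`ℓ = k` of the remaining sum `∑ 2ℓ / ℓ!` more than covers it.
-/

open Finset

theorem sum_Icc_sub_one_div_factorial {K : Type*} [Field K] [CharZero K] (n : ℕ) :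
    ∑ ℓ ∈ Icc 1 n, ((ℓ : K) - 1) / ℓ.factorial = 1 - 1 / n.factorial := by
  induction n with
  | zero => simp
  | succ n ih =>
    rw [sum_Icc_succ_top (Nat.le_add_left 1 n), ih, Nat.factorial_succ]
    push_cast
    field_simp
    ring

theorem sum_ineq_one (k : ℕ) (hk : 1 ≤ k) :
    (k : ℝ) ≤ ∑ ℓ ∈ Finset.Icc 1 k,
      (((ℓ : ℝ) - 1) * k + 2 * ℓ) / (Nat.factorial ℓ) := by
  have hsplit : ∑ ℓ ∈ Icc 1 k, (((ℓ : ℝ) - 1) * k + 2 * ℓ) / ℓ.factorial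
      = k * ∑ ℓ ∈ Icc 1 k, ((ℓ : ℝ) - 1) / ℓ.factorial
        + ∑ ℓ ∈ Icc 1 k, 2 * (ℓ : ℝ) / ℓ.factorial := by
    rw [mul_sum, ← sum_add_distrib]
    exact sum_congr rfl fun ℓ _ => by ring
  have hlast : 2 * (k : ℝ) / k.factorial ≤ ∑ ℓ ∈ Icc 1 k, 2 * (ℓ : ℝ) / ℓ.factorial :=
    single_le_sum (f := fun ℓ : ℕ => 2 * (ℓ : ℝ) / ℓ.factorial) (fun ℓ _ => by positivity)
      (mem_Icc.2 ⟨hk, le_rfl⟩)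
  rw [hsplit, sum_Icc_sub_one_div_factorial]
  calc (k : ℝ) ≤ k * (1 - 1 / k.factorial) + 2 * k / k.factorial := by
        have hrw : (k : ℝ) * (1 - 1 / k.factorial) + 2 * k / k.factorial
            = k + k / k.factorial := by ring
        rw [hrw]
        exact le_add_of_nonneg_right (by positivity)
    _ ≤ _ := by gcongr
end

section
/- Let κ > 0 and define α_k(κ) by α_0 = 1, α_{k+1} = (κ/((k+1)(k+2))) ∑_{ℓ=0}^{k} α_{k-ℓ}/ℓ!. Suppose there is k₀ ≥ 1 with α_{k₀+1}(κ) < min_{k ≤ k₀} α_k(κ). Then α_{k+1}(κ) < α_k(κ) for all k ≥ k₀. -/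
/-!
Write `S_k = expConv α k = ∑_{ℓ ≤ k} α_{k-ℓ}/ℓ!`, so that `(k+1)(k+2) α_{k+1} = κ S_k`. Shifting the index,
`S_{k+1} = α_{k+1} + ∑_{ℓ ≤ k} α_{k-ℓ}/(ℓ+1)!`, and the telescoping sum
`∑_{ℓ ≤ k} (1/ℓ! - 1/(ℓ+1)!) = 1 - 1/(k+1)!` gives `S_{k+1} ≤ S_k + α_{k+1}/(k+1)!` as soon as
`α_{k+1}` is a minimum of `α_0, …, α_{k+1}`. If it is a strict minimum, then `α_{k+1} < α_k ≤ S_k`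
forces `κ < (k+1)(k+2)`, hence `κ/(k+1)! < 2(k+2)`, and
`(k+2)(k+3) α_{k+2} = κ S_{k+1} < ((k+1)(k+2) + 2(k+2)) α_{k+1}`. So `α_{k+2}` is again a strict
minimum, and induction from `k₀` finishes.
-/

open Finset

noncomputable def expConv (α : ℕ → ℝ) (k : ℕ) : ℝ :=
  ∑ ℓ ∈ range (k + 1), α (k - ℓ) / (Nat.factorial ℓ)

theorem expConv_succ (α : ℕ → ℝ) (k : ℕ) :
    expConv α (k + 1) =
      α (k + 1) + ∑ ℓ ∈ range (k + 1), α (k - ℓ) / (Nat.factorial (ℓ + 1)) := by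
  rw [expConv, sum_range_succ', add_comm]
  simp

theorem le_expConv {α : ℕ → ℝ} {k : ℕ} (h : ∀ j ≤ k, 0 ≤ α j) : α k ≤ expConv α k := by
  have h0 : (0 : ℕ) ∈ range (k + 1) := mem_range.2 k.succ_pos
  calc α k = α (k - 0) / (Nat.factorial 0) := by simp
    _ ≤ expConv α k :=
      single_le_sum (fun ℓ _ => div_nonneg (h _ (Nat.sub_le k ℓ)) (Nat.cast_nonneg _)) h0

theorem sum_range_inv_factorial_sub (n : ℕ) :
    ∑ ℓ ∈ range n, ((Nat.factorial ℓ : ℝ)⁻¹ - (Nat.factorial (ℓ + 1) : ℝ)⁻¹) =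
      1 - (Nat.factorial n : ℝ)⁻¹ := by
  simp [sum_range_sub' (fun ℓ => (Nat.factorial ℓ : ℝ)⁻¹)]

theorem expConv_succ_le {α : ℕ → ℝ} {k : ℕ} (h : ∀ j ≤ k, α (k + 1) ≤ α j) :
    expConv α (k + 1) ≤ expConv α k + α (k + 1) / (Nat.factorial (k + 1)) := by
  have hdiff : expConv α k - (expConv α (k + 1) - α (k + 1)) =
      ∑ ℓ ∈ range (k + 1),
        α (k - ℓ) * ((Nat.factorial ℓ : ℝ)⁻¹ - (Nat.factorial (ℓ + 1) : ℝ)⁻¹) := by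
    rw [expConv_succ, add_sub_cancel_left, expConv, ← sum_sub_distrib]
    simp only [mul_sub, div_eq_mul_inv]
  have hlow : α (k + 1) * (1 - (Nat.factorial (k + 1) : ℝ)⁻¹) ≤
      expConv α k - (expConv α (k + 1) - α (k + 1)) := by
    rw [hdiff, ← sum_range_inv_factorial_sub, mul_sum]
    refine sum_le_sum fun ℓ _ => mul_le_mul_of_nonneg_right (h _ (Nat.sub_le k ℓ)) ?_
    exact sub_nonneg.2 <| inv_anti₀ (by positivity) <| by
      exact_mod_cast Nat.factorial_le ℓ.le_succ
  rw [div_eq_mul_inv]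
  linarith

section Recursion

variable {κ : ℝ} {α : ℕ → ℝ}
  (hrec : ∀ k : ℕ, α (k + 1) = κ / ((k + 1) * (k + 2)) * expConv α k)
include hrec

theorem pos_of_expConv_rec (hκ : 0 < κ) (h0 : 0 < α 0) (k : ℕ) : 0 < α k := by
  induction k using Nat.strong_induction_on with
  | _ k ih =>
    rcases k with _ | k
    · exact h0
    · have hS : 0 < expConv α k :=
        (ih k k.lt_succ_self).trans_le (le_expConv fun j hj => (ih j (by omega)).le)
      rw [hrec k]
      positivity

theorem mul_expConv_eq (k : ℕ) :
    κ * expConv α k = ((k + 1) * (k + 2)) * α (k + 1) := by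
  rw [hrec k]
  field_simp

theorem succ_succ_lt_of_forall_succ_lt (hκ : 0 < κ) (hpos : ∀ k, 0 < α k) {k : ℕ}
    (h : ∀ j ≤ k, α (k + 1) < α j) : α (k + 2) < α (k + 1) := by
  have hS : α (k + 1) < expConv α k :=
    (h k le_rfl).trans_le (le_expConv fun j _ => (hpos j).le)
  have hκ_lt : κ < (k + 1) * (k + 2) := by
    have := mul_expConv_eq hrec k
    nlinarith [hpos (k + 1)]
  have hfac : ((k : ℝ) + 1) ≤ Nat.factorial (k + 1) := by
    exact_mod_cast Nat.self_le_factorial (k + 1)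
  have hκ_fac : κ / (Nat.factorial (k + 1)) < 2 * (k + 2) := by
    rw [div_lt_iff₀ (by positivity)]
    nlinarith
  have hmul : ((k + 2) * (k + 3)) * α (k + 2) < ((k + 2) * (k + 3)) * α (k + 1) :=
    calc ((k + 2) * (k + 3)) * α (k + 2) = κ * expConv α (k + 1) := by
          rw [mul_expConv_eq hrec (k + 1)]; push_cast; ring
      _ ≤ κ * (expConv α k + α (k + 1) / (Nat.factorial (k + 1))) :=
          mul_le_mul_of_nonneg_left (expConv_succ_le fun j hj => (h j hj).le) hκ.le
      _ = ((k + 1) * (k + 2) + κ / (Nat.factorial (k + 1))) * α (k + 1) := by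
          rw [mul_add, mul_expConv_eq hrec k]; ring
      _ < ((k + 1) * (k + 2) + 2 * (k + 2)) * α (k + 1) := by
          gcongr
          exact hpos (k + 1)
      _ = ((k + 2) * (k + 3)) * α (k + 1) := by ring
  exact lt_of_mul_lt_mul_left hmul (by positivity)

end Recursion

theorem alpha_decreasing_general (κ : ℝ) (hκ : 0 < κ) (α : ℕ → ℝ) (hα0 : α 0 = 1)
    (hrec : ∀ k : ℕ, α (k + 1) =
      κ / ((k + 1) * (k + 2)) *
        ∑ ℓ ∈ Finset.range (k + 1), α (k - ℓ) / (Nat.factorial ℓ))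
    (k₀ : ℕ) (hmin : ∀ k ≤ k₀, α (k₀ + 1) < α k) :
    ∀ k, k₀ ≤ k → α (k + 1) < α k := by
  have hpos := pos_of_expConv_rec hrec hκ (hα0 ▸ one_pos)
  have hmin_all : ∀ k, k₀ ≤ k → ∀ j ≤ k, α (k + 1) < α j := by
    intro k hk
    induction k, hk using Nat.le_induction with
    | base => exact hmin
    | succ k _ ih =>
      have hnext := succ_succ_lt_of_forall_succ_lt hrec hκ hpos ih
      intro j hj
      rcases Nat.lt_or_eq_of_le hj with hj | rfl
      · exact hnext.trans (ih j (Nat.le_of_lt_succ hj))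
      · exact hnext
  exact fun k hk => hmin_all k hk k le_rfl

theorem alpha_decreasing (κ : ℝ) (hκ : 0 < κ) (α : ℕ → ℝ) (hα0 : α 0 = 1)
    (hrec : ∀ k : ℕ, α (k + 1) =
      κ / ((k + 1) * (k + 2)) *
        ∑ ℓ ∈ Finset.range (k + 1), α (k - ℓ) / (Nat.factorial ℓ))
    (k₀ : ℕ) (hk₀ : 1 ≤ k₀) (hmin : ∀ k ≤ k₀, α (k₀ + 1) < α k) :
    ∀ k, k₀ ≤ k → α (k + 1) < α k :=
  alpha_decreasing_general κ hκ α hα0 hrec k₀ hmin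
end

section
/- Define ω_0(r) = 1 and ω_{k+1}(r) = ∫_r^∞ ∫_s^∞ (e^{-t}/t) ω_k(t) dt ds for r > 0. Then for all k ≥ 1 and all r ≥ 1, 0 < ω_k(r) ≤ e^{-kr}/(k!)². -/
/-!
Bound every `ω k` on `[1, ∞)` between two decaying exponentials.  For `t ≥ 1` the Yukawa
kernel satisfies `e^{-2t} ≤ e^{-t}/t ≤ e^{-t}`, and `∫_r^∞ C e^{-bt} dt = (C/b) e^{-br}`.  One step
of the recursion multiplies by the kernel, raising the upper rate from `k` to `k + 1`, and then
integrates twice, dividing by `(k + 1)²`; so `e^{-kr}/(k!)²` reproduces itself.  The lower bound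
stays a positive multiple of an exponential, which gives positivity.
-/

open MeasureTheory Real Set

structure ExpEnvelope (f : ℝ → ℝ) (r₀ c a B b : ℝ) : Prop where
  aestronglyMeasurable : AEStronglyMeasurable f (volume.restrict (Ioi r₀))
  lower_le : ∀ t, r₀ ≤ t → c * exp (-a * t) ≤ f t
  le_upper : ∀ t, r₀ ≤ t → f t ≤ B * exp (-b * t)

lemma integral_exp_neg_mul_Ioi {b : ℝ} (hb : 0 < b) (r : ℝ) :
    ∫ t in Ioi r, exp (-b * t) = exp (-b * r) / b := by
  rw [integral_exp_mul_Ioi (neg_lt_zero.mpr hb), neg_div_neg_eq]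

lemma exp_neg_two_mul_le_exp_neg_div {t : ℝ} (ht : 0 < t) : exp (-2 * t) ≤ exp (-t) / t := by
  rw [le_div_iff₀ ht]
  calc exp (-2 * t) * t ≤ exp (-2 * t) * exp t := by gcongr; linarith [add_one_le_exp t]
    _ = exp (-t) := by rw [← exp_add]; ring_nf

namespace ExpEnvelope

variable {f g : ℝ → ℝ} {r₀ c a B b : ℝ}

lemma nonneg (h : ExpEnvelope f r₀ c a B b) (hc : 0 ≤ c) {t : ℝ} (ht : r₀ ≤ t) : 0 ≤ f t :=
  (mul_nonneg hc (exp_pos _).le).trans (h.lower_le t ht)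

lemma congr (h : ExpEnvelope f r₀ c a B b) (hfg : ∀ t, r₀ ≤ t → f t = g t) :
    ExpEnvelope g r₀ c a B b where
  aestronglyMeasurable := h.aestronglyMeasurable.congr <|
    ae_restrict_of_forall_mem measurableSet_Ioi fun t ht => hfg t (le_of_lt ht)
  lower_le t ht := hfg t ht ▸ h.lower_le t ht
  le_upper t ht := hfg t ht ▸ h.le_upper t ht

lemma integrableOn_Ioi (h : ExpEnvelope f r₀ c a B b) (hc : 0 ≤ c) (hb : 0 < b) {r : ℝ}
    (hr : r₀ ≤ r) : IntegrableOn f (Ioi r) := by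
  refine ((exp_neg_integrableOn_Ioi r hb).const_mul B).mono'
    (h.aestronglyMeasurable.mono_set (Ioi_subset_Ioi hr)) ?_
  refine ae_restrict_of_forall_mem measurableSet_Ioi fun t ht => ?_
  have hrt : r₀ ≤ t := hr.trans (le_of_lt ht)
  rw [norm_of_nonneg (h.nonneg hc hrt)]
  exact h.le_upper t hrt

lemma antitoneOn_integral_Ioi (h : ExpEnvelope f r₀ c a B b) (hc : 0 ≤ c) (hb : 0 < b) :
    AntitoneOn (fun r => ∫ t in Ioi r, f t) (Ici r₀) := fun _ hs _ _ hss' =>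
  setIntegral_mono_set (h.integrableOn_Ioi hc hb hs)
    (ae_restrict_of_forall_mem measurableSet_Ioi fun _ ht => h.nonneg hc (hs.trans (le_of_lt ht)))
    (Ioi_subset_Ioi hss').eventuallyLE

theorem integral_Ioi (h : ExpEnvelope f r₀ c a B b) (hc : 0 ≤ c) (ha : 0 < a) (hb : 0 < b) :
    ExpEnvelope (fun r => ∫ t in Ioi r, f t) r₀ (c / a) a (B / b) b where
  aestronglyMeasurable :=
    (aemeasurable_restrict_of_antitoneOn measurableSet_Ioi
      ((h.antitoneOn_integral_Ioi hc hb).mono Ioi_subset_Ici_self)).aestronglyMeasurable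
  lower_le r hr := calc
    c / a * exp (-a * r) = ∫ t in Ioi r, c * exp (-a * t) := by
      rw [integral_const_mul, integral_exp_neg_mul_Ioi ha]; ring
    _ ≤ ∫ t in Ioi r, f t :=
      setIntegral_mono_on ((exp_neg_integrableOn_Ioi r ha).const_mul c)
        (h.integrableOn_Ioi hc hb hr) measurableSet_Ioi
        fun t ht => h.lower_le t (hr.trans (le_of_lt ht))
  le_upper r hr := calc
    ∫ t in Ioi r, f t ≤ ∫ t in Ioi r, B * exp (-b * t) :=
      setIntegral_mono_on (h.integrableOn_Ioi hc hb hr)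
        ((exp_neg_integrableOn_Ioi r hb).const_mul B) measurableSet_Ioi
        fun t ht => h.le_upper t (hr.trans (le_of_lt ht))
    _ = B / b * exp (-b * r) := by
      rw [integral_const_mul, integral_exp_neg_mul_Ioi hb]; ring

theorem yukawa_mul (h : ExpEnvelope f r₀ c a B b) (hr₀ : 1 ≤ r₀) (hc : 0 ≤ c) :
    ExpEnvelope (fun t => exp (-t) / t * f t) r₀ c (a + 2) B (b + 1) where
  aestronglyMeasurable :=
    (by fun_prop : Measurable fun t : ℝ => exp (-t) / t).aestronglyMeasurable.mul
      h.aestronglyMeasurable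
  lower_le t ht := calc
    c * exp (-(a + 2) * t) = exp (-2 * t) * (c * exp (-a * t)) := by
      rw [← mul_left_comm, ← exp_add]; ring_nf
    _ ≤ exp (-t) / t * f t :=
      mul_le_mul (exp_neg_two_mul_le_exp_neg_div (by linarith)) (h.lower_le t ht)
        (mul_nonneg hc (exp_pos _).le) (div_nonneg (exp_pos _).le (by linarith))
  le_upper t ht := calc
    exp (-t) / t * f t ≤ exp (-t) * (B * exp (-b * t)) :=
      mul_le_mul (div_le_self (exp_pos _).le (hr₀.trans ht)) (h.le_upper t ht)
        (h.nonneg hc ht) (exp_pos _).le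
    _ = B * exp (-(b + 1) * t) := by
      rw [mul_left_comm, ← exp_add]; ring_nf

end ExpEnvelope

theorem omega_bounds (ω : ℕ → ℝ → ℝ) (hω0 : ∀ r, ω 0 r = 1)
    (hrec : ∀ k : ℕ, ∀ r : ℝ, 0 < r → ω (k + 1) r =
      ∫ s in Set.Ioi r, ∫ t in Set.Ioi s, Real.exp (-t) / t * ω k t) :
    ∀ k : ℕ, 1 ≤ k → ∀ r : ℝ, 1 ≤ r →
      0 < ω k r ∧ ω k r ≤ Real.exp (-(k : ℝ) * r) / (Nat.factorial k : ℝ) ^ 2 := by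
  have envelope : ∀ k : ℕ, ∃ c > 0, ∃ a > 0,
      ExpEnvelope (ω k) 1 c a ((Nat.factorial k : ℝ) ^ 2)⁻¹ k := by
    intro k
    induction k with
    | zero =>
      refine ⟨1, one_pos, 1, one_pos, ?_⟩
      rw [show ω 0 = fun _ => 1 from funext hω0]
      refine ⟨aestronglyMeasurable_const, fun t ht => ?_, fun t _ => by simp⟩
      simpa using exp_le_one_iff.mpr (by linarith : -t ≤ 0)
    | succ k ih =>
      obtain ⟨c, hc, a, ha, h⟩ := ih
      have hk : (0 : ℝ) < k + 1 := by positivity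
      have twice := ((h.yukawa_mul le_rfl hc.le).integral_Ioi hc.le (by positivity) hk
        ).integral_Ioi (by positivity) (by positivity) hk
      have hB : ((Nat.factorial k : ℝ) ^ 2)⁻¹ / (k + 1) / (k + 1) =
          ((Nat.factorial (k + 1) : ℝ) ^ 2)⁻¹ := by
        push_cast [Nat.factorial_succ]; field_simp
      rw [hB, ← Nat.cast_succ] at twice
      exact ⟨_, by positivity, _, by positivity,
        twice.congr fun r hr => (hrec k r (by linarith)).symm⟩
  intro k _ r hr
  obtain ⟨c, hc, a, -, h⟩ := envelope k
  exact ⟨(by positivity : 0 < c * exp (-a * r)).trans_le (h.lower_le r hr),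
    (h.le_upper r hr).trans_eq (inv_mul_eq_div _ _)⟩
end
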